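/- arXiv:1804.03926 — 3 statements merged into one kernel-verified Lean document; each statement's English description precedes it below -/
import Mathlib

section
/- Let X be a random variable and g, h measurable real-valued functions with E[g(X) e^{g(X)}] ≤ E[h(X) e^{g(X)}] < ∞. Then E[e^{g(X)}] ≤ E[e^{h(X)}]. -/
open MeasureTheory

theorem laplace_transform_comparison {Ω : Type*} [MeasurableSpace Ω]
    (μ : Measure Ω) [IsProbabilityMeasure μ]
    (g h : Ω → ℝ) (hgm : Measurable g) (hhm : Measurable h)
    (hint_g : Integrable (fun ω => g ω * Real.exp (g ω)) μ)
    (hint_h : Integrable (fun ω => h ω * Real.exp (g ω)) μ)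
    (hle : ∫ ω, g ω * Real.exp (g ω) ∂μ ≤ ∫ ω, h ω * Real.exp (g ω) ∂μ) :
    ∫⁻ ω, ENNReal.ofReal (Real.exp (g ω)) ∂μ
      ≤ ∫⁻ ω, ENNReal.ofReal (Real.exp (h ω)) ∂μ := by
  -- e^g is integrable since e^g ≤ e + |g e^g|
  have hexpg : Integrable (fun ω => Real.exp (g ω)) μ := by
    refine Integrable.mono' ((integrable_const (Real.exp 1)).add hint_g.abs)
      (hgm.exp.aestronglyMeasurable) (Filter.Eventually.of_forall fun ω => ?_)
    rw [Real.norm_eq_abs, abs_of_pos (Real.exp_pos _)]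
    simp only [Pi.add_apply]
    rcases le_or_gt (g ω) 1 with hc | hc
    · have : Real.exp (g ω) ≤ Real.exp 1 := Real.exp_le_exp.mpr hc
      have h2 : (0:ℝ) ≤ |g ω * Real.exp (g ω)| := abs_nonneg _
      linarith
    · have h1 : Real.exp (g ω) ≤ g ω * Real.exp (g ω) := by
        nlinarith [Real.exp_pos (g ω)]
      have h2 : g ω * Real.exp (g ω) ≤ |g ω * Real.exp (g ω)| := le_abs_self _
      have h3 : (0:ℝ) < Real.exp 1 := Real.exp_pos _
      linarith
  set f : Ω → ℝ := fun ω => Real.exp (g ω) + (h ω * Real.exp (g ω) - g ω * Real.exp (g ω))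
    with hf
  have hsubint : Integrable (fun ω => h ω * Real.exp (g ω) - g ω * Real.exp (g ω)) μ :=
    hint_h.sub hint_g
  have hfint : Integrable f μ := hexpg.add hsubint
  have h1 : ∫⁻ ω, ENNReal.ofReal (Real.exp (g ω)) ∂μ = ENNReal.ofReal (∫ ω, Real.exp (g ω) ∂μ) :=
    (ofReal_integral_eq_lintegral_ofReal hexpg
      (Filter.Eventually.of_forall fun ω => (Real.exp_pos _).le)).symm
  have h2 : ∫ ω, Real.exp (g ω) ∂μ ≤ ∫ ω, f ω ∂μ := by
    rw [hf, integral_add hexpg hsubint, integral_sub hint_h hint_g]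
    linarith
  have h3 : ENNReal.ofReal (∫ ω, f ω ∂μ) ≤ ∫⁻ ω, ENNReal.ofReal (f ω) ∂μ := by
    have heq := integral_eq_lintegral_pos_part_sub_lintegral_neg_part hfint
    have hle' : ∫ ω, f ω ∂μ ≤ (∫⁻ ω, ENNReal.ofReal (f ω) ∂μ).toReal := by
      rw [heq]
      have : (0:ℝ) ≤ (∫⁻ ω, ENNReal.ofReal (-f ω) ∂μ).toReal := ENNReal.toReal_nonneg
      linarith
    calc ENNReal.ofReal (∫ ω, f ω ∂μ)
        ≤ ENNReal.ofReal ((∫⁻ ω, ENNReal.ofReal (f ω) ∂μ).toReal) :=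
          ENNReal.ofReal_le_ofReal hle'
      _ ≤ ∫⁻ ω, ENNReal.ofReal (f ω) ∂μ := ENNReal.ofReal_toReal_le
  have h4 : ∫⁻ ω, ENNReal.ofReal (f ω) ∂μ ≤ ∫⁻ ω, ENNReal.ofReal (Real.exp (h ω)) ∂μ := by
    refine lintegral_mono fun ω => ENNReal.ofReal_le_ofReal ?_
    have key : 1 + (h ω - g ω) ≤ Real.exp (h ω - g ω) := by
      have := Real.add_one_le_exp (h ω - g ω); linarith
    have hp := Real.exp_pos (g ω)
    have : Real.exp (g ω) * (1 + (h ω - g ω)) ≤ Real.exp (g ω) * Real.exp (h ω - g ω) := by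
      exact mul_le_mul_of_nonneg_left key hp.le
    rw [← Real.exp_add, show g ω + (h ω - g ω) = h ω by ring] at this
    simp only [hf]
    nlinarith
  calc ∫⁻ ω, ENNReal.ofReal (Real.exp (g ω)) ∂μ
      = ENNReal.ofReal (∫ ω, Real.exp (g ω) ∂μ) := h1
    _ ≤ ENNReal.ofReal (∫ ω, f ω ∂μ) := ENNReal.ofReal_le_ofReal h2
    _ ≤ ∫⁻ ω, ENNReal.ofReal (f ω) ∂μ := h3
    _ ≤ _ := h4
end

section
/- Let X have distribution ν on ℝ with mean 0, density p with connected support, and Stein kernel τ_ν satisfying τ_ν ≥ σ² > 0 ν-almost surely. Then for every x ≥ 0, ∫_x^∞ y p(y) dy ≥ E[X₊] · exp(−x²/(2σ²)). -/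
/-!
Write `T(t) = ∫_t^∞ y p(y) dy`. The Stein bound says `σ² p ≤ T` on the support, while
`T(t) - T(b) = ∫_t^b y p(y) dy`; hence `T(t) ≤ T(b) + ∫_t^b (y / σ²) T(y) dy` for `0 ≤ t ≤ b`,
and the backward Grönwall inequality makes `t ↦ T(t) e^{t²/(2σ²)}` nondecreasing on `[0, ∞)`.
It remains to start at a point where `T` equals `E[X₊]`. Where `y ↦ y p(y)` is not integrable on
`(t, ∞)`, Lean's `T(t)` is `0`, so the Stein bound fails there and such `t` are `ν`-null. Thus `ν`
puts no mass on `(0, t₀)`, with `t₀` the infimum of the admissible points of `[0, x]`, so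
`E[X₊] = ∫_{(t₀, ∞)} y dν`, and `t ↦ ∫_{(t, ∞)} y dν` is continuous since `ν` has no atoms.
-/

open MeasureTheory Set

theorem continuous_setIntegral_Ioi {E : Type*} [NormedAddCommGroup E] [NormedSpace ℝ E]
    {μ : Measure ℝ} [NullSingletonClass μ] {f : ℝ → E} (hf : Integrable f μ) :
    Continuous fun t => ∫ x in Ioi t, f x ∂μ := by
  have h : (fun t => ∫ x in Ioi t, f x ∂μ)
      = fun t => (∫ x in Ioi 0, f x ∂μ) - ∫ x in 0..t, f x ∂μ := by
    funext t
    rw [← intervalIntegral.integral_Ioi_sub_Ioi' hf.integrableOn hf.integrableOn, sub_sub_cancel]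
  rw [h]
  exact continuous_const.sub
    (intervalIntegral.continuous_primitive (fun _ _ => hf.intervalIntegrable) 0)

theorem mul_exp_le_mul_exp_of_le_add_integral {u k K : ℝ → ℝ} {a b : ℝ} (hab : a ≤ b)
    (hu : Continuous u) (hk : Continuous k) (hK : ∀ t, HasDerivAt K (k t) t)
    (hk0 : ∀ t ∈ Icc a b, 0 ≤ k t)
    (h : ∀ t ∈ Icc a b, u t ≤ u b + ∫ y in t..b, k y * u y) :
    u a * Real.exp (K a) ≤ u b * Real.exp (K b) := by
  set φ : ℝ → ℝ := fun t => (u b + ∫ y in t..b, k y * u y) * Real.exp (K t)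
  have hφ : ∀ t,
      HasDerivAt φ (k t * Real.exp (K t) * ((u b + ∫ y in t..b, k y * u y) - u t)) t := by
    intro t
    have hku := hk.mul hu
    have hG := intervalIntegral.integral_hasDerivAt_left (hku.intervalIntegrable t b)
      (hku.stronglyMeasurableAtFilter _ _) hku.continuousAt
    exact (((hG.const_add (u b)).mul (hK t).exp)).congr_deriv (by simp only [Pi.mul_apply]; ring)
  have hmono : MonotoneOn φ (Icc a b) := by
    refine monotoneOn_of_deriv_nonneg (convex_Icc a b)
      (fun t _ => (hφ t).continuousAt.continuousWithinAt)
      (fun t _ => (hφ t).differentiableAt.differentiableWithinAt) fun t ht => ?_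
    rw [interior_Icc] at ht
    rw [(hφ t).deriv]
    exact mul_nonneg (mul_nonneg (hk0 t (Ioo_subset_Icc_self ht)) (Real.exp_pos _).le)
      (sub_nonneg.2 (h t (Ioo_subset_Icc_self ht)))
  calc u a * Real.exp (K a) ≤ φ a :=
        mul_le_mul_of_nonneg_right (h a (left_mem_Icc.2 hab)) (Real.exp_pos _).le
    _ ≤ φ b := hmono (left_mem_Icc.2 hab) (right_mem_Icc.2 hab) hab
    _ = u b * Real.exp (K b) := by simp [φ]

theorem integral_max_zero_eq_setIntegral_Ioi {μ : Measure ℝ} {t : ℝ}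
    (h : ∀ᵐ y ∂μ, 0 < y ↔ t < y) : ∫ y, max y 0 ∂μ = ∫ y in Ioi t, y ∂μ := by
  have hmax : (fun y : ℝ => max y 0) = (Ioi 0).indicator id := by
    funext y
    rcases lt_or_ge 0 y with hy | hy
    · simp [hy, hy.le]
    · simp [hy, not_lt.2 hy]
  rw [hmax, integral_indicator measurableSet_Ioi]
  exact setIntegral_congr_set (Filter.eventuallyEq_set.2 h)

/-- `p` is not assumed measurable; integrability of `y ↦ y p(y)` recovers it away from `0`. -/
theorem aemeasurable_restrict_of_integrableOn_id_mul {μ : Measure ℝ} {p : ℝ → ℝ} {s : Set ℝ}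
    (hs : MeasurableSet s) (h0 : (0 : ℝ) ∉ s) (h : IntegrableOn (fun y => y * p y) s μ) :
    AEMeasurable p (μ.restrict s) := by
  refine (h.aemeasurable.div aemeasurable_id).congr ?_
  filter_upwards [ae_restrict_mem hs] with y hy
  exact mul_div_cancel_left₀ _ (ne_of_mem_of_not_mem hy h0)

theorem setIntegral_id_withDensity {μ : Measure ℝ} {p : ℝ → ℝ} {s : Set ℝ} (hp : ∀ x, 0 ≤ p x)
    (hs : MeasurableSet s) (h0 : (0 : ℝ) ∉ s) (h : IntegrableOn (fun y => y * p y) s μ) :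
    ∫ y in s, y ∂(μ.withDensity fun x => ENNReal.ofReal (p x)) = ∫ y in s, y * p y ∂μ := by
  rw [restrict_withDensity hs, integral_withDensity_eq_integral_toReal_smul₀
    (aemeasurable_restrict_of_integrableOn_id_mul hs h0 h).ennreal_ofReal
    (ae_of_all _ fun _ => ENNReal.ofReal_lt_top)]
  simp only [ENNReal.toReal_ofReal (hp _), smul_eq_mul, mul_comm]

noncomputable def tailMoment (p : ℝ → ℝ) (t : ℝ) : ℝ := ∫ y in Ioi t, y * p y

theorem tailMoment_nonneg {p : ℝ → ℝ} (hp : ∀ x, 0 ≤ p x) {t : ℝ} (ht : 0 ≤ t) :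
    0 ≤ tailMoment p t :=
  setIntegral_nonneg measurableSet_Ioi fun y hy => mul_nonneg (ht.trans (le_of_lt hy)) (hp y)

theorem continuous_tailMoment_max {p : ℝ → ℝ} {a : ℝ}
    (h : IntegrableOn (fun y => y * p y) (Ioi a)) :
    Continuous fun t => tailMoment p (max t a) := by
  refine (continuous_setIntegral_Ioi (h.integrable_indicator measurableSet_Ioi)).congr fun t => ?_
  rw [setIntegral_indicator measurableSet_Ioi, Ioi_inter_Ioi]
  rfl

theorem ae_mul_le_tailMoment {p : ℝ → ℝ} (hp : ∀ x, 0 ≤ p x) {c a : ℝ} (ha : 0 ≤ a)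
    (h : IntegrableOn (fun y => y * p y) (Ioi a))
    (hbound : ∀ᵐ y ∂(volume.withDensity fun x => ENNReal.ofReal (p x)),
      c ≤ tailMoment p y / p y) :
    ∀ᵐ y ∂(volume.restrict (Ioi a)), c * p y ≤ tailMoment p y := by
  have hpa := aemeasurable_restrict_of_integrableOn_id_mul measurableSet_Ioi
    (fun h0 => (mem_Ioi.1 h0).not_ge ha) h
  have hrestr := ae_restrict_of_ae (s := Ioi a) hbound
  rw [restrict_withDensity measurableSet_Ioi, ae_withDensity_iff' hpa.ennreal_ofReal] at hrestr
  filter_upwards [hrestr, ae_restrict_mem measurableSet_Ioi] with y hy hya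
  rcases (hp y).eq_or_lt with hp0 | hp0
  · rw [← hp0, mul_zero]
    exact tailMoment_nonneg hp (ha.trans (le_of_lt hya))
  · exact (le_div_iff₀ hp0).1 (hy (ENNReal.ofReal_pos.2 hp0).ne')

theorem tailMoment_mul_exp_le {p : ℝ → ℝ} {σ a b : ℝ} (hσ : σ ≠ 0) (ha : 0 ≤ a) (hab : a ≤ b)
    (h : IntegrableOn (fun y => y * p y) (Ioi a))
    (hkey : ∀ᵐ y ∂(volume.restrict (Ioi a)), σ ^ 2 * p y ≤ tailMoment p y) :
    tailMoment p a * Real.exp (a ^ 2 / (2 * σ ^ 2))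
      ≤ tailMoment p b * Real.exp (b ^ 2 / (2 * σ ^ 2)) := by
  have hmax : ∀ t, a ≤ t → tailMoment p (max t a) = tailMoment p t := fun t ht => by
    rw [max_eq_left ht]
  have hK : ∀ t, HasDerivAt (fun y => y ^ 2 / (2 * σ ^ 2)) (t / σ ^ 2) t := fun t =>
    ((hasDerivAt_pow 2 t).div_const _).congr_deriv (by field_simp; ring)
  rw [restrict_Ioi_eq_restrict_Ici] at hkey
  have hle : ∀ t ∈ Icc a b, tailMoment p (max t a) ≤ tailMoment p (max b a)
      + ∫ y in t..b, y / σ ^ 2 * tailMoment p (max y a) := by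
    rintro t ⟨hat, htb⟩
    have hsplit : tailMoment p t = tailMoment p b + ∫ y in t..b, y * p y := by
      rw [← intervalIntegral.integral_Ioi_sub_Ioi (h.mono_set (Ioi_subset_Ioi hat)) htb,
        tailMoment, tailMoment, add_sub_cancel]
    rw [hmax t hat, hmax b hab, hsplit]
    refine add_le_add_right (intervalIntegral.integral_mono_ae_restrict htb
      ((intervalIntegrable_iff_integrableOn_Ioc_of_le htb).2
        (h.mono_set (Ioc_subset_Ioi_self.trans (Ioi_subset_Ioi hat))))
      (((continuous_id.div_const _).mul (continuous_tailMoment_max h)).intervalIntegrable _ _)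
      ?_) _
    filter_upwards [ae_restrict_of_ae_restrict_of_subset (Icc_subset_Ici_iff htb |>.2 hat) hkey,
      ae_restrict_mem measurableSet_Icc] with y hy hyI
    have hay : a ≤ y := hat.trans hyI.1
    simp only [Pi.mul_apply, id, hmax y hay, div_mul_eq_mul_div]
    rw [le_div_iff₀ (by positivity)]
    calc y * p y * σ ^ 2 = y * (σ ^ 2 * p y) := by ring
      _ ≤ y * tailMoment p y := mul_le_mul_of_nonneg_left hy (ha.trans hay)
  have := mul_exp_le_mul_exp_of_le_add_integral hab (continuous_tailMoment_max h)
    (continuous_id.div_const _) hK (fun t ht => div_nonneg (ha.trans ht.1) (sq_nonneg σ)) hle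
  rwa [hmax a le_rfl, hmax b hab] at this

theorem setIntegral_Ioi_mul_exp_le_tailMoment {p : ℝ → ℝ} (hp : ∀ x, 0 ≤ p x) {ν : Measure ℝ}
    (hν : ν = volume.withDensity fun x => ENNReal.ofReal (p x)) {σ a x : ℝ}
    (hσ : σ ≠ 0) (ha : 0 ≤ a) (hax : a ≤ x) (h : IntegrableOn (fun y => y * p y) (Ioi a))
    (hbound : ∀ᵐ y ∂ν, σ ^ 2 ≤ tailMoment p y / p y) :
    (∫ y in Ioi a, y ∂ν) * Real.exp (-x ^ 2 / (2 * σ ^ 2)) ≤ tailMoment p x := by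
  subst hν
  rw [setIntegral_id_withDensity hp measurableSet_Ioi (fun h0 => (mem_Ioi.1 h0).not_ge ha) h]
  have hgrowth := tailMoment_mul_exp_le hσ ha hax h (ae_mul_le_tailMoment hp ha h hbound)
  calc tailMoment p a * Real.exp (-x ^ 2 / (2 * σ ^ 2))
      ≤ tailMoment p a * Real.exp (a ^ 2 / (2 * σ ^ 2)) * Real.exp (-x ^ 2 / (2 * σ ^ 2)) := by
        gcongr
        exact le_mul_of_one_le_right (tailMoment_nonneg hp ha) (Real.one_le_exp (by positivity))
    _ ≤ tailMoment p x * Real.exp (x ^ 2 / (2 * σ ^ 2)) * Real.exp (-x ^ 2 / (2 * σ ^ 2)) := by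
        gcongr
    _ = tailMoment p x := by
        rw [mul_assoc, ← Real.exp_add, neg_div, add_neg_cancel, Real.exp_zero, mul_one]

theorem lower_tail_integral_bound_general
    (p : ℝ → ℝ) (hp : ∀ x, 0 ≤ p x)
    (ν : Measure ℝ)
    (hν : ν = volume.withDensity (fun x => ENNReal.ofReal (p x)))
    (hmom : Integrable (fun x => x) ν)
    (hmean : ∫ x, x ∂ν = 0)
    (τ : ℝ → ℝ) (hτ : ∀ x, τ x = (∫ y in Ioi x, y * p y) / p x)
    (σ : ℝ) (hσ : 0 < σ) (hbound : ∀ᵐ x ∂ν, σ ^ 2 ≤ τ x)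
    (x : ℝ) (hx : 0 ≤ x) :
    (∫ y, max y 0 ∂ν) * Real.exp (-x ^ 2 / (2 * σ ^ 2))
      ≤ ∫ y in Ioi x, y * p y := by
  have : NullSingletonClass ν := hν ▸ inferInstance
  have hstein : ∀ᵐ y ∂ν, σ ^ 2 ≤ tailMoment p y / p y := by
    filter_upwards [hbound] with y hy
    rwa [hτ] at hy
  -- where `y ↦ y p(y)` is not integrable on `(t, ∞)` the junk value `τ t = 0` violates the bound
  have hI : ∀ᵐ y ∂ν, IntegrableOn (fun z => z * p z) (Ioi y) := by
    filter_upwards [hstein] with y hy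
    by_contra hy'
    rw [tailMoment, integral_undef hy', zero_div] at hy
    exact hy.not_gt (by positivity)
  change _ ≤ tailMoment p x
  by_cases hxI : IntegrableOn (fun y => y * p y) (Ioi x)
  · set J := {a ∈ Icc 0 x | IntegrableOn (fun y => y * p y) (Ioi a)}
    have hxJ : x ∈ J := ⟨⟨hx, le_rfl⟩, hxI⟩
    have hJbdd : BddBelow J := ⟨0, fun a ha => ha.1.1⟩
    have hpos : ∀ᵐ y ∂ν, 0 < y ↔ sInf J < y := by
      filter_upwards [hI, Measure.ae_ne ν (sInf J)] with y hyI hyt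
      refine ⟨fun hy0 => lt_of_not_ge fun hyJ => hyt ?_,
        (le_csInf ⟨x, hxJ⟩ fun a ha => ha.1.1).trans_lt⟩
      exact le_antisymm hyJ (csInf_le hJbdd ⟨⟨hy0.le, hyJ.trans (csInf_le hJbdd hxJ)⟩, hyI⟩)
    rw [integral_max_zero_eq_setIntegral_Ioi hpos]
    exact (isClosed_le ((continuous_setIntegral_Ioi hmom).mul_const _) continuous_const
      ).closure_subset_iff.2 (fun a ha => setIntegral_Ioi_mul_exp_le_tailMoment hp hν hσ.ne'
        ha.1.1 ha.1.2 ha.2 hstein) (csInf_mem_closure ⟨x, hxJ⟩ hJbdd)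
  · have hgt : ∀ᵐ y ∂ν, x < y := by
      filter_upwards [hI] with y hy
      exact lt_of_not_ge fun hyx => hxI (hy.mono_set (Ioi_subset_Ioi hyx))
    have hzero : ∫ y, max y 0 ∂ν = 0 :=
      (integral_congr_ae (hgt.mono fun y hy => max_eq_left (hx.trans hy.le))).trans hmean
    rw [hzero, zero_mul, tailMoment, integral_undef hxI]

theorem lower_tail_integral_bound
    (p : ℝ → ℝ) (hp : ∀ x, 0 ≤ p x)
    (ν : Measure ℝ)
    (hν : ν = volume.withDensity (fun x => ENNReal.ofReal (p x)))
    [IsProbabilityMeasure ν]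
    (hconn : OrdConnected {x | 0 < p x})
    (hmom : Integrable (fun x => x) ν)
    (hmean : ∫ x, x ∂ν = 0)
    (τ : ℝ → ℝ) (hτ : ∀ x, τ x = (∫ y in Ioi x, y * p y) / p x)
    (σ : ℝ) (hσ : 0 < σ) (hbound : ∀ᵐ x ∂ν, σ ^ 2 ≤ τ x)
    (x : ℝ) (hx : 0 ≤ x) :
    (∫ y, max y 0 ∂ν) * Real.exp (-x ^ 2 / (2 * σ ^ 2))
      ≤ ∫ y in Ioi x, y * p y :=
  lower_tail_integral_bound_general p hp ν hν hmom hmean τ hτ σ hσ hbound x hx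
end

section
/- Let X have distribution ν on ℝ with mean 0, density p with connected support, Stein kernel τ_ν ≥ σ² > 0 ν-a.s., and suppose in addition that L(x) = x^{1+β} p(x) is nonincreasing on [s, ∞) for some s > 0 and β > 1. Then for all x ≥ s, P(X ≥ x) ≥ (1 − 1/β) · (E[X₊]/x) · exp(−x²/(2σ²)). -/
/-!
Write `H t = ∫_{t}^{∞} y p(y) dy = τ(t) p(t)`, so that `E[X₊] = H 0` and `H' = -t p`. The Stein
bound `σ² p ≤ H` is the differential inequality `-H'(t) ≤ t H(t) / σ²`, and Gronwall's lemma (in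
integral form, via Fubini) gives `H 0 ≤ exp (x² / 2σ²) H x`. The monotonicity of `x^{1+β} p(x)`
gives `∫_{y}^{∞} p ≤ y p(y) / β` for `y ≥ s`; integrating this,
`H x = x P(X > x) + ∫_{x}^{∞} P(X > y) dy ≤ x P(X ≥ x) + H x / β`.
-/

open MeasureTheory Set ENNReal

theorem lintegral_mul_lintegral_Ioi {a : ℝ} {s : Set ℝ} (hs : MeasurableSet s) (hsa : s ⊆ Ici a)
    {v f : ℝ → ℝ≥0∞} (hv : AEMeasurable v (volume.restrict s))
    (hf : AEMeasurable f (volume.restrict (Ioi a))) :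
    ∫⁻ z in s, v z * ∫⁻ w in Ioi z, f w = ∫⁻ w in Ioi a, (∫⁻ z in Iio w ∩ s, v z) * f w := by
  set F : ℝ → ℝ → ℝ≥0∞ := fun z w => (Ioi z).indicator (fun w => v z * f w) w
  have hF : AEMeasurable (Function.uncurry F)
      ((volume.restrict s).prod (volume.restrict (Ioi a))) :=
    (hv.comp_fst.mul hf.comp_snd).indicator (measurableSet_lt measurable_fst measurable_snd)
  have hw : ∀ z ∈ s, v z * ∫⁻ w in Ioi z, f w = ∫⁻ w in Ioi a, F z w := fun z hz => by
    have hza : Ioi z ⊆ Ioi a := Ioi_subset_Ioi (hsa hz)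
    rw [lintegral_indicator measurableSet_Ioi, Measure.restrict_restrict measurableSet_Ioi,
      inter_eq_left.2 hza,
      lintegral_const_mul'' _ (hf.mono_measure (Measure.restrict_mono hza le_rfl))]
  have hz : ∀ w, ∫⁻ z in s, F z w = (∫⁻ z in Iio w ∩ s, v z) * f w := fun w => by
    rw [← Measure.restrict_restrict measurableSet_Iio, ← lintegral_indicator measurableSet_Iio,
      ← lintegral_mul_const'' _ (hv.indicator measurableSet_Iio)]
    congr 1 with z
    by_cases hzw : z < w <;> simp [F, hzw]
  calc ∫⁻ z in s, v z * ∫⁻ w in Ioi z, f w = ∫⁻ z in s, ∫⁻ w in Ioi a, F z w :=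
        setLIntegral_congr_fun hs hw
    _ = ∫⁻ w in Ioi a, ∫⁻ z in s, F z w := lintegral_lintegral_swap hF
    _ = _ := by simp_rw [hz]

theorem lintegral_Ioi_lintegral_Ioi {x : ℝ} {f : ℝ → ℝ≥0∞}
    (hf : AEMeasurable f (volume.restrict (Ioi x))) :
    ∫⁻ y in Ioi x, ∫⁻ w in Ioi y, f w = ∫⁻ w in Ioi x, ENNReal.ofReal (w - x) * f w := by
  simpa [Iio_inter_Ioi] using lintegral_mul_lintegral_Ioi measurableSet_Ioi Ioi_subset_Ici_self
    aemeasurable_const hf (v := 1)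

theorem lintegral_Ioi_ofReal_mul {x : ℝ} (hx : 0 ≤ x) {f : ℝ → ℝ≥0∞}
    (hf : AEMeasurable f (volume.restrict (Ioi x))) :
    ∫⁻ w in Ioi x, ENNReal.ofReal w * f w
      = ENNReal.ofReal x * (∫⁻ w in Ioi x, f w) + ∫⁻ y in Ioi x, ∫⁻ w in Ioi y, f w := by
  rw [lintegral_Ioi_lintegral_Ioi hf, ← lintegral_const_mul'' _ hf,
    ← lintegral_add_left' (hf.const_mul _)]
  refine setLIntegral_congr_fun measurableSet_Ioi fun w hw => ?_
  rw [← add_mul, ← ofReal_add hx (sub_nonneg.2 (le_of_lt hw)), add_sub_cancel]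

/-- Gronwall's lemma for the tail `z ↦ ∫⁻ w in Ioi z, f w`, with the integrating factor
`1 + ∫⁻ t in Ioc a z, v t` in place of an exponential. -/
theorem lintegral_Ioi_le_one_add_mul_lintegral_Ioi {a b : ℝ} (hab : a ≤ b) {v f : ℝ → ℝ≥0∞}
    (hv : AEMeasurable v (volume.restrict (Ioc a b)))
    (hf : AEMeasurable f (volume.restrict (Ioi a)))
    (hvb : ∫⁻ z in Ioc a b, v z ≠ ∞) (hfb : ∫⁻ w in Ioc a b, f w ≠ ∞)
    (h : ∀ᵐ z ∂volume.restrict (Ioc a b),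
      f z * (1 + ∫⁻ t in Ioc a z, v t) ≤ v z * ∫⁻ w in Ioi z, f w) :
    ∫⁻ w in Ioi a, f w ≤ (1 + ∫⁻ z in Ioc a b, v z) * ∫⁻ w in Ioi b, f w := by
  set V : ℝ → ℝ≥0∞ := fun w => ∫⁻ t in Ioc a w, v t
  have hsplit : ∀ g : ℝ → ℝ≥0∞,
      ∫⁻ w in Ioi a, g w = (∫⁻ w in Ioc a b, g w) + ∫⁻ w in Ioi b, g w := fun g => by
    rw [← Ioc_union_Ioi_eq_Ioi hab, lintegral_union measurableSet_Ioi (Ioc_disjoint_Ioi le_rfl)]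
  have hswap : ∫⁻ z in Ioc a b, v z * ∫⁻ w in Ioi z, f w
      = (∫⁻ w in Ioc a b, V w * f w) + V b * ∫⁻ w in Ioi b, f w := by
    rw [lintegral_mul_lintegral_Ioi measurableSet_Ioc (fun z hz => hz.1.le) hv hf, hsplit,
      ← lintegral_const_mul' _ _ hvb]
    congr 1
    · refine setLIntegral_congr_fun measurableSet_Ioc fun w hw => ?_
      have hIoo : Iio w ∩ Ioc a b = Ioo a w := by
        ext z
        simp only [mem_inter_iff, mem_Iio, mem_Ioc, mem_Ioo]
        exact ⟨fun ⟨h1, h2, _⟩ => ⟨h2, h1⟩, fun ⟨h1, h2⟩ => ⟨h2, h1, h2.le.trans hw.2⟩⟩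
      rw [hIoo, Measure.restrict_congr_set Ioo_ae_eq_Ioc]
    · refine setLIntegral_congr_fun measurableSet_Ioi fun w hw => ?_
      rw [inter_eq_right.2 fun z hz => hz.2.trans_lt hw]
  have hVf : ∫⁻ w in Ioc a b, V w * f w ≠ ∞ := by
    refine ne_top_of_le_ne_top (mul_ne_top hvb hfb) ?_
    rw [← lintegral_const_mul' _ _ hvb]
    exact setLIntegral_mono' measurableSet_Ioc fun w hw =>
      mul_le_mul_left (lintegral_mono_set (Ioc_subset_Ioc_right hw.2)) _
  have hmid : ∫⁻ w in Ioc a b, f w ≤ V b * ∫⁻ w in Ioi b, f w := by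
    refine ENNReal.le_of_add_le_add_left hVf ?_
    calc (∫⁻ w in Ioc a b, V w * f w) + ∫⁻ w in Ioc a b, f w
        = ∫⁻ z in Ioc a b, f z * (1 + V z) := by
          rw [← lintegral_add_right' _
            (hf.mono_measure (Measure.restrict_mono Ioc_subset_Ioi_self le_rfl))]
          congr 1 with z
          ring
      _ ≤ ∫⁻ z in Ioc a b, v z * ∫⁻ w in Ioi z, f w := lintegral_mono_ae h
      _ = _ := by rw [hswap]
  calc ∫⁻ w in Ioi a, f w = (∫⁻ w in Ioc a b, f w) + ∫⁻ w in Ioi b, f w := hsplit f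
    _ ≤ V b * (∫⁻ w in Ioi b, f w) + ∫⁻ w in Ioi b, f w := by gcongr
    _ = (1 + V b) * ∫⁻ w in Ioi b, f w := by ring

theorem one_add_lintegral_Ioc_mul_exp_primitive {k : ℝ → ℝ} (hk : Continuous k) {a b : ℝ}
    (hab : a ≤ b) (hk0 : ∀ z ∈ Icc a b, 0 ≤ k z) :
    1 + ∫⁻ z in Ioc a b, ENNReal.ofReal (k z * Real.exp (∫ t in a..z, k t))
      = ENNReal.ofReal (Real.exp (∫ t in a..b, k t)) := by
  have hderiv : ∀ z, HasDerivAt (fun z => Real.exp (∫ t in a..z, k t))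
      (k z * Real.exp (∫ t in a..z, k t)) z := fun z => by
    simpa only [mul_comm] using (hk.integral_hasStrictDerivAt a z).hasDerivAt.exp
  have hcont : Continuous fun z => k z * Real.exp (∫ t in a..z, k t) := hk.mul
    (Real.continuous_exp.comp (intervalIntegral.continuous_primitive hk.intervalIntegrable a))
  have hnonneg : 0 ≤ᵐ[volume.restrict (Ioc a b)] fun z => k z * Real.exp (∫ t in a..z, k t) :=
    (ae_restrict_mem measurableSet_Ioc).mono fun z hz =>
      mul_nonneg (hk0 z (Ioc_subset_Icc_self hz)) (Real.exp_nonneg _)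
  rw [← ofReal_integral_eq_lintegral_ofReal
      (hcont.integrableOn_Icc.mono_set Ioc_subset_Icc_self) hnonneg,
    ← intervalIntegral.integral_of_le hab,
    intervalIntegral.integral_eq_sub_of_hasDerivAt (fun z _ => hderiv z)
      (hcont.intervalIntegrable a b),
    intervalIntegral.integral_same, Real.exp_zero, ← ofReal_one, ← ofReal_add zero_le_one
      (sub_nonneg.2 (Real.one_le_exp (intervalIntegral.integral_nonneg hab hk0))),
    add_sub_cancel]

theorem lintegral_Ioi_le_exp_mul_lintegral_Ioi {k : ℝ → ℝ} (hk : Continuous k) {a b : ℝ}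
    (hab : a ≤ b) (hk0 : ∀ z ∈ Icc a b, 0 ≤ k z) {f : ℝ → ℝ≥0∞}
    (hf : AEMeasurable f (volume.restrict (Ioi a))) (hfb : ∫⁻ w in Ioc a b, f w ≠ ∞)
    (h : ∀ᵐ z ∂volume.restrict (Ioc a b), f z ≤ ENNReal.ofReal (k z) * ∫⁻ w in Ioi z, f w) :
    ∫⁻ w in Ioi a, f w ≤ ENNReal.ofReal (Real.exp (∫ t in a..b, k t)) * ∫⁻ w in Ioi b, f w := by
  set v : ℝ → ℝ≥0∞ := fun z => ENNReal.ofReal (k z * Real.exp (∫ t in a..z, k t))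
  have hv : Continuous fun z => k z * Real.exp (∫ t in a..z, k t) := hk.mul
    (Real.continuous_exp.comp (intervalIntegral.continuous_primitive hk.intervalIntegrable a))
  have hV : ∀ z ∈ Icc a b,
      1 + ∫⁻ t in Ioc a z, v t = ENNReal.ofReal (Real.exp (∫ t in a..z, k t)) := fun z hz =>
    one_add_lintegral_Ioc_mul_exp_primitive hk hz.1 fun t ht => hk0 t ⟨ht.1, ht.2.trans hz.2⟩
  rw [← hV b ⟨hab, le_rfl⟩]
  refine lintegral_Ioi_le_one_add_mul_lintegral_Ioi hab hv.measurable.ennreal_ofReal.aemeasurable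
    hf (ENNReal.add_ne_top.1 ((hV b ⟨hab, le_rfl⟩).symm ▸ ofReal_ne_top)).2 hfb ?_
  filter_upwards [h, ae_restrict_mem measurableSet_Ioc] with z hz hzab
  rw [hV z (Ioc_subset_Icc_self hzab)]
  calc f z * ENNReal.ofReal (Real.exp (∫ t in a..z, k t))
      ≤ ENNReal.ofReal (k z) * (∫⁻ w in Ioi z, f w)
          * ENNReal.ofReal (Real.exp (∫ t in a..z, k t)) := by gcongr
    _ = v z * ∫⁻ w in Ioi z, f w := by
        rw [mul_right_comm, ← ENNReal.ofReal_mul (hk0 z (Ioc_subset_Icc_self hzab))]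

theorem lintegral_Ioi_le_of_antitoneOn_rpow_mul {p : ℝ → ℝ} {β y : ℝ} (hβ : 0 < β) (hy : 0 < y)
    (hpy : 0 ≤ p y) (hmono : AntitoneOn (fun x => x ^ (1 + β) * p x) (Ici y)) :
    ∫⁻ w in Ioi y, ENNReal.ofReal (p w) ≤ ENNReal.ofReal (y * p y / β) := by
  set C := y ^ (1 + β) * p y
  have hexp : -(1 + β) < -1 := by linarith
  have hle : ∀ w ∈ Ioi y, p w ≤ C * w ^ (-(1 + β)) := fun w hw => by
    have hw0 : 0 < w := hy.trans hw
    rw [Real.rpow_neg hw0.le, ← div_eq_mul_inv, le_div_iff₀ (by positivity), mul_comm]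
    exact hmono (mem_Ici.2 le_rfl) (mem_Ici.2 (le_of_lt hw)) (le_of_lt hw)
  calc ∫⁻ w in Ioi y, ENNReal.ofReal (p w)
      ≤ ∫⁻ w in Ioi y, ENNReal.ofReal (C * w ^ (-(1 + β))) :=
        setLIntegral_mono' measurableSet_Ioi fun w hw => ENNReal.ofReal_le_ofReal (hle w hw)
    _ = ENNReal.ofReal (∫ w in Ioi y, C * w ^ (-(1 + β))) := by
        refine (ofReal_integral_eq_lintegral_ofReal
          ((integrableOn_Ioi_rpow_of_lt hexp hy).const_mul C) ?_).symm
        filter_upwards [ae_restrict_mem measurableSet_Ioi] with w hw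
        exact mul_nonneg (by positivity) (Real.rpow_nonneg (hy.trans hw).le _)
    _ = ENNReal.ofReal (y * p y / β) := by
        simp only [C]
        rw [integral_const_mul, integral_Ioi_rpow_of_lt hexp hy, show -(1 + β) + 1 = -β by ring,
          Real.rpow_add hy, Real.rpow_one, Real.rpow_neg hy.le]
        field_simp

theorem aemeasurable_of_integrableOn_mul {p : ℝ → ℝ} {s : Set ℝ} (hs : MeasurableSet s)
    (h0 : (0 : ℝ) ∉ s) (h : IntegrableOn (fun y => y * p y) s) :
    AEMeasurable p (volume.restrict s) :=
  (h.aemeasurable.mul measurable_inv.aemeasurable).congr <|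
    (ae_restrict_mem hs).mono fun y hy => by
      simp only [Pi.mul_apply]
      field_simp [ne_of_mem_of_not_mem hy h0]

theorem one_sub_inv_mul_setIntegral_Ioi_le {p : ℝ → ℝ} (hp : ∀ y, 0 ≤ p y) {β x : ℝ}
    (hβ : 0 < β) (hx : 0 < x) (hint : IntegrableOn (fun y => y * p y) (Ioi x))
    (hmono : AntitoneOn (fun y => y ^ (1 + β) * p y) (Ici x)) :
    (1 - β⁻¹) * ∫ y in Ioi x, y * p y
      ≤ x * (∫⁻ y in Ioi x, ENNReal.ofReal (p y)).toReal := by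
  set H := ∫ y in Ioi x, y * p y
  set T := ∫⁻ y in Ioi x, ENNReal.ofReal (p y)
  have hH : 0 ≤ H :=
    setIntegral_nonneg measurableSet_Ioi fun y hy => mul_nonneg (hx.trans hy).le (hp y)
  have hT : T ≠ ∞ := ne_top_of_le_ne_top ofReal_ne_top
    (lintegral_Ioi_le_of_antitoneOn_rpow_mul hβ hx (hp x) hmono)
  have hM : ∫⁻ w in Ioi x, ENNReal.ofReal w * ENNReal.ofReal (p w) = ENNReal.ofReal H := by
    rw [ofReal_integral_eq_lintegral_ofReal hint
      ((ae_restrict_mem measurableSet_Ioi).mono fun y hy => mul_nonneg (hx.trans hy).le (hp y))]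
    exact setLIntegral_congr_fun measurableSet_Ioi fun w hw => (ofReal_mul (hx.trans hw).le).symm
  have hpm : AEMeasurable (fun y => ENNReal.ofReal (p y)) (volume.restrict (Ioi x)) :=
    (aemeasurable_of_integrableOn_mul measurableSet_Ioi (lt_irrefl 0 <| hx.trans ·)
      hint).ennreal_ofReal
  have htail : ∫⁻ y in Ioi x, ∫⁻ w in Ioi y, ENNReal.ofReal (p w)
      ≤ ENNReal.ofReal β⁻¹ * ENNReal.ofReal H := by
    rw [← hM, ← lintegral_const_mul' _ _ ofReal_ne_top]
    refine setLIntegral_mono' measurableSet_Ioi fun y hy => ?_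
    have hy0 : 0 < y := hx.trans hy
    refine (lintegral_Ioi_le_of_antitoneOn_rpow_mul hβ hy0 (hp y)
      (hmono.mono (Ici_subset_Ici.2 (le_of_lt hy)))).trans_eq ?_
    rw [← ofReal_mul hy0.le, ← ofReal_mul (inv_nonneg.2 hβ.le), div_eq_inv_mul]
  have hchain : ENNReal.ofReal H ≤ ENNReal.ofReal (x * T.toReal + β⁻¹ * H) :=
    calc ENNReal.ofReal H
        = ENNReal.ofReal x * T + ∫⁻ y in Ioi x, ∫⁻ w in Ioi y, ENNReal.ofReal (p w) := by
          rw [← hM, lintegral_Ioi_ofReal_mul hx.le hpm]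
      _ ≤ ENNReal.ofReal x * T + ENNReal.ofReal β⁻¹ * ENNReal.ofReal H := by gcongr
      _ = ENNReal.ofReal (x * T.toReal + β⁻¹ * H) := by
          rw [ENNReal.ofReal_add (by positivity) (mul_nonneg (inv_nonneg.2 hβ.le) hH),
            ENNReal.ofReal_mul hx.le, ENNReal.ofReal_mul (inv_nonneg.2 hβ.le), ofReal_toReal hT]
  rw [ENNReal.ofReal_le_ofReal_iff (by positivity)] at hchain
  linarith

theorem setIntegral_Ioi_mul_le_exp_mul {p : ℝ → ℝ} (hp : ∀ y, 0 ≤ p y)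
    (hint : IntegrableOn (fun y => y * p y) (Ioi 0)) {σ : ℝ} (hσ : σ ≠ 0) {x : ℝ} (hx : 0 ≤ x)
    (hstein : ∀ᵐ z ∂volume.restrict (Ioc 0 x), σ ^ 2 * p z ≤ ∫ y in Ioi z, y * p y) :
    ∫ y in Ioi 0, y * p y ≤ Real.exp (x ^ 2 / (2 * σ ^ 2)) * ∫ y in Ioi x, y * p y := by
  have hH : ∀ t, 0 ≤ t →
      ∫⁻ y in Ioi t, ENNReal.ofReal (y * p y) = ENNReal.ofReal (∫ y in Ioi t, y * p y) :=
    fun t ht => (ofReal_integral_eq_lintegral_ofReal (hint.mono_set (Ioi_subset_Ioi ht))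
      ((ae_restrict_mem measurableSet_Ioi).mono fun y hy =>
        mul_nonneg (ht.trans hy.le) (hp y))).symm
  have hk : ∫ t in (0)..x, t / σ ^ 2 = x ^ 2 / (2 * σ ^ 2) := by
    rw [intervalIntegral.integral_div, integral_id]
    ring
  have hgronwall := lintegral_Ioi_le_exp_mul_lintegral_Ioi (k := fun t => t / σ ^ 2)
    (by fun_prop) hx (fun z hz => div_nonneg hz.1 (sq_nonneg σ))
    hint.aemeasurable.ennreal_ofReal
    (ne_top_of_le_ne_top (hH 0 le_rfl ▸ ofReal_ne_top) (lintegral_mono_set Ioc_subset_Ioi_self))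
    (by
      filter_upwards [hstein, ae_restrict_mem measurableSet_Ioc] with z hz hz0
      rw [hH z hz0.1.le, ← ofReal_mul (div_nonneg hz0.1.le (sq_nonneg σ))]
      refine ENNReal.ofReal_le_ofReal ?_
      calc z * p z = z / σ ^ 2 * (σ ^ 2 * p z) := by field_simp
        _ ≤ z / σ ^ 2 * ∫ y in Ioi z, y * p y := by
          gcongr
          exact div_nonneg hz0.1.le (sq_nonneg σ))
  rwa [hH 0 le_rfl, hH x hx, hk, ← ofReal_mul (Real.exp_nonneg _),
    ENNReal.ofReal_le_ofReal_iff (mul_nonneg (Real.exp_nonneg _)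
      (setIntegral_nonneg measurableSet_Ioi fun y hy => mul_nonneg (hx.trans hy.le) (hp y)))]
    at hgronwall

theorem exists_neg_of_integral_id_eq_zero {μ : Measure ℝ} [IsProbabilityMeasure μ]
    (h0 : μ {0} = 0) (hint : Integrable (fun x => x) μ) (hmean : ∫ x, x ∂μ = 0)
    {P : ℝ → Prop} (hP : ∀ᵐ x ∂μ, P x) : ∃ z < 0, P z := by
  refine Measure.exists_mem_of_measure_ne_zero_of_ae (s := Iio 0) (fun hneg => ?_)
    (ae_restrict_of_ae hP)
  have hpos : ∀ᵐ x ∂μ, 0 < x := by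
    have : μ (Iic 0) = 0 := by rw [← Iio_union_right]; exact measure_union_null hneg h0
    exact ae_iff.2 (by simp only [not_lt]; exact this)
  have hzero : ∀ᵐ x ∂μ, x = 0 :=
    (integral_eq_zero_iff_of_nonneg_ae (hpos.mono fun x hx => hx.le) hint).1 hmean
  obtain ⟨x, hx, rfl⟩ := (hpos.and hzero).exists
  exact lt_irrefl _ hx

theorem ae_restrict_imp_of_ae_withDensity {α : Type*} [MeasurableSpace α] {μ : Measure α}
    {ρ : α → ℝ≥0∞} {s : Set α} (hs : MeasurableSet s) (hρ : AEMeasurable ρ (μ.restrict s))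
    {P : α → Prop} (h : ∀ᵐ x ∂μ.withDensity ρ, P x) : ∀ᵐ x ∂μ.restrict s, ρ x ≠ 0 → P x := by
  rw [← ae_withDensity_iff' hρ, ← restrict_withDensity hs]
  exact ae_restrict_of_ae h

theorem ae_mul_le_setIntegral_Ioi_of_le_div {p : ℝ → ℝ} (hp : ∀ x, 0 ≤ p x)
    (hpm : AEMeasurable p (volume.restrict (Ioi 0))) {c : ℝ}
    (h : ∀ᵐ x ∂volume.withDensity (fun x => ENNReal.ofReal (p x)),
      c ≤ (∫ y in Ioi x, y * p y) / p x) :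
    ∀ᵐ z ∂volume.restrict (Ioi 0), c * p z ≤ ∫ y in Ioi z, y * p y := by
  filter_upwards [ae_restrict_imp_of_ae_withDensity measurableSet_Ioi hpm.ennreal_ofReal h,
    ae_restrict_mem measurableSet_Ioi] with z hz hz0
  rcases (hp z).eq_or_lt with hpz | hpz
  · rw [← hpz, mul_zero]
    exact setIntegral_nonneg measurableSet_Ioi fun y hy => mul_nonneg (hz0.trans hy).le (hp y)
  · exact (le_div_iff₀ hpz).1 (hz (ENNReal.ofReal_pos.2 hpz).ne')

-- A positive quotient rules out the junk value `0` of a non-integrable Bochner integral.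
theorem integrableOn_Ioi_of_le_div {p : ℝ → ℝ} {c z : ℝ} (hc : 0 < c)
    (h : c ≤ (∫ y in Ioi z, y * p y) / p z) : IntegrableOn (fun y => y * p y) (Ioi z) :=
  Integrable.of_integral_ne_zero fun h0 => by
    rw [h0, zero_div] at h
    exact absurd h (not_le.2 hc)

theorem integral_max_zero_withDensity {p : ℝ → ℝ} (hp : ∀ x, 0 ≤ p x)
    (hpm : AEMeasurable p (volume.restrict (Ioi 0))) :
    ∫ y, max y 0 ∂volume.withDensity (fun y => ENNReal.ofReal (p y))
      = ∫ y in Ioi 0, y * p y := by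
  have hmax : (fun y : ℝ => max y 0) = (Ioi 0).indicator id := by
    ext y
    by_cases hy : 0 < y
    · simp [hy, hy.le]
    · simp [hy, not_lt.1 hy]
  rw [hmax, integral_indicator measurableSet_Ioi]
  refine (setIntegral_withDensity_eq_setIntegral_smul₀ (f := fun y => (p y).toNNReal)
    hpm.real_toNNReal id measurableSet_Ioi).trans ?_
  refine setIntegral_congr_fun measurableSet_Ioi fun y _ => ?_
  rw [NNReal.smul_def, Real.coe_toNNReal _ (hp y), smul_eq_mul, mul_comm, id]

theorem lower_tail_bound_general
    (p : ℝ → ℝ) (hp : ∀ x, 0 ≤ p x)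
    (ν : Measure ℝ)
    (hν : ν = volume.withDensity (fun x => ENNReal.ofReal (p x)))
    [IsProbabilityMeasure ν]
    (hmom : Integrable (fun x => x) ν)
    (hmean : ∫ x, x ∂ν = 0)
    (τ : ℝ → ℝ) (hτ : ∀ x, τ x = (∫ y in Ioi x, y * p y) / p x)
    (σ : ℝ) (hσ : 0 < σ) (hbound : ∀ᵐ x ∂ν, σ ^ 2 ≤ τ x)
    (β s : ℝ) (hβ : 1 < β) (hs : 0 < s)
    (hmono : AntitoneOn (fun x => x ^ (1 + β) * p x) (Ici s))
    (x : ℝ) (hx : s ≤ x) :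
    (1 - 1 / β) * ((∫ y, max y 0 ∂ν) / x) * Real.exp (-x ^ 2 / (2 * σ ^ 2))
      ≤ (ν (Ici x)).toReal := by
  subst hν
  obtain rfl : τ = fun x => (∫ y in Ioi x, y * p y) / p x := funext hτ
  have hx0 : 0 < x := hs.trans_le hx
  obtain ⟨z, hz, hzτ⟩ := exists_neg_of_integral_id_eq_zero
    (withDensity_absolutelyContinuous _ _ Real.volume_singleton) hmom hmean hbound
  have hint : IntegrableOn (fun y => y * p y) (Ioi 0) :=
    (integrableOn_Ioi_of_le_div (by positivity) hzτ).mono_set (Ioi_subset_Ioi hz.le)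
  -- `p` itself is not assumed measurable.
  have hpm := aemeasurable_of_integrableOn_mul measurableSet_Ioi (lt_irrefl (0 : ℝ)) hint
  have hgronwall := setIntegral_Ioi_mul_le_exp_mul hp hint hσ.ne' hx0.le
    (ae_restrict_of_ae_restrict_of_subset Ioc_subset_Ioi_self
      (ae_mul_le_setIntegral_Ioi_of_le_div hp hpm hbound))
  have htail := one_sub_inv_mul_setIntegral_Ioi_le hp (by linarith) hx0
    (hint.mono_set (Ioi_subset_Ioi hx0.le)) (hmono.mono (Ici_subset_Ici.2 hx))
  rw [integral_max_zero_withDensity hp hpm, withDensity_apply _ measurableSet_Ici,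
    Measure.restrict_congr_set Ioi_ae_eq_Ici.symm, one_div]
  have hdamped :
      (∫ y in Ioi 0, y * p y) * Real.exp (-x ^ 2 / (2 * σ ^ 2)) ≤ ∫ y in Ioi x, y * p y := by
    rwa [neg_div, Real.exp_neg, ← div_eq_mul_inv, div_le_iff₀ (Real.exp_pos _), mul_comm]
  have hβ' : 0 ≤ 1 - β⁻¹ := sub_nonneg.2 (inv_le_one_of_one_le₀ hβ.le)
  calc (1 - β⁻¹) * ((∫ y in Ioi 0, y * p y) / x) * Real.exp (-x ^ 2 / (2 * σ ^ 2))
      = (1 - β⁻¹) * ((∫ y in Ioi 0, y * p y) * Real.exp (-x ^ 2 / (2 * σ ^ 2))) / x := by ring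
    _ ≤ (1 - β⁻¹) * (∫ y in Ioi x, y * p y) / x := by gcongr
    _ ≤ x * (∫⁻ y in Ioi x, ENNReal.ofReal (p y)).toReal / x := by gcongr
    _ = _ := by field_simp

theorem lower_tail_bound
    (p : ℝ → ℝ) (hp : ∀ x, 0 ≤ p x)
    (ν : Measure ℝ)
    (hν : ν = volume.withDensity (fun x => ENNReal.ofReal (p x)))
    [IsProbabilityMeasure ν]
    (hconn : OrdConnected {x | 0 < p x})
    (hmom : Integrable (fun x => x) ν)
    (hmean : ∫ x, x ∂ν = 0)
    (τ : ℝ → ℝ) (hτ : ∀ x, τ x = (∫ y in Ioi x, y * p y) / p x)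
    (σ : ℝ) (hσ : 0 < σ) (hbound : ∀ᵐ x ∂ν, σ ^ 2 ≤ τ x)
    (β s : ℝ) (hβ : 1 < β) (hs : 0 < s)
    (hmono : AntitoneOn (fun x => x ^ (1 + β) * p x) (Ici s))
    (x : ℝ) (hx : s ≤ x) :
    (1 - 1 / β) * ((∫ y, max y 0 ∂ν) / x) * Real.exp (-x ^ 2 / (2 * σ ^ 2))
      ≤ (ν (Ici x)).toReal :=
  lower_tail_bound_general p hp ν hν hmom hmean τ hτ σ hσ hbound β s hβ hs hmono x hx
end
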